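/- arXiv:2009.01762 — 4 statements merged into one kernel-verified Lean document; each statement's English description precedes it below -/
import Mathlib

section
/- Let G(λ) = λX + Y be a T-even matrix pencil (X = -X^T, Y = Y^T real m×m matrices been allowed complex evaluation) and let ζ ∈ ℂ be such that G(ζ) = ζX + Y and G(-ζ) are invertible. Define K(ζ) = G(ζ)^{-T} X G(ζ)^{-1} X. If G(μ)x = 0 for some μ ∈ ℂ and nonzero x ∈ ℂ^m, and μ² ≠ ζ², then K(ζ)x = θx with θ = 1/(μ² - ζ²). -/
open Matrix

/-- The pencil `G(ζ) = ζX + Y`, viewed as a complex matrix. -/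
noncomputable def Gpencil (m : ℕ) (X Y : Matrix (Fin m) (Fin m) ℝ) (z : ℂ) :
    Matrix (Fin m) (Fin m) ℂ :=
  z • X.map Complex.ofReal + Y.map Complex.ofReal

/-- The transformed matrix `K(ζ) = G(ζ)^{-T} X G(ζ)^{-1} X`. -/
noncomputable def Kzeta (m : ℕ) (X Y : Matrix (Fin m) (Fin m) ℝ) (z : ℂ) :
    Matrix (Fin m) (Fin m) ℂ :=
  ((Gpencil m X Y z)ᵀ)⁻¹ * X.map Complex.ofReal *
    (Gpencil m X Y z)⁻¹ * X.map Complex.ofReal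

/-- if `G(μ)x = 0` with `x ≠ 0` and `μ² ≠ ζ²`, then
`K(ζ)x = θx` with `θ = 1/(μ² - ζ²)`. -/
theorem stmt3 (m : ℕ) (X Y : Matrix (Fin m) (Fin m) ℝ)
    (hX : Xᵀ = -X) (hY : Yᵀ = Y) (ζ : ℂ)
    (hζ : IsUnit (Gpencil m X Y ζ)) (hζ' : IsUnit (Gpencil m X Y (-ζ)))
    (μ : ℂ) (x : Fin m → ℂ) (hx : x ≠ 0)
    (hGx : (Gpencil m X Y μ) *ᵥ x = 0) (hμζ : μ ^ 2 ≠ ζ ^ 2) :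
    (Kzeta m X Y ζ) *ᵥ x = (1 / (μ ^ 2 - ζ ^ 2)) • x := by
  set A : Matrix (Fin m) (Fin m) ℂ := X.map Complex.ofReal with hAdef
  -- transpose of the pencil
  have hGT : (Gpencil m X Y ζ)ᵀ = Gpencil m X Y (-ζ) := by
    ext i j
    have h1 : X j i = -X i j := by
      have := congrFun (congrFun hX i) j
      simpa [Matrix.transpose_apply] using this
    have h2 : Y j i = Y i j := by
      have := congrFun (congrFun hY i) j
      simpa [Matrix.transpose_apply] using this
    simp [Gpencil, Matrix.transpose_apply, Matrix.map_apply, h1, h2]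
  -- key lemma
  have key : ∀ z : ℂ, IsUnit (Gpencil m X Y z) → z ≠ μ →
      (Gpencil m X Y z)⁻¹ *ᵥ (A *ᵥ x) = (z - μ)⁻¹ • x := by
    intro z hz hzμ
    have hsplit : Gpencil m X Y z = (z - μ) • A + Gpencil m X Y μ := by
      simp [Gpencil, hAdef, sub_smul, add_smul]
      abel
    have hGz : Gpencil m X Y z *ᵥ x = (z - μ) • (A *ᵥ x) := by
      rw [hsplit, Matrix.add_mulVec, hGx, add_zero, Matrix.smul_mulVec]
    have hAx : A *ᵥ x = (z - μ)⁻¹ • (Gpencil m X Y z *ᵥ x) := by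
      rw [hGz, smul_smul, inv_mul_cancel₀ (sub_ne_zero.mpr hzμ), one_smul]
    rw [hAx, Matrix.mulVec_smul, Matrix.mulVec_mulVec,
      Matrix.nonsing_inv_mul _ ((Matrix.isUnit_iff_isUnit_det _).mp hz), Matrix.one_mulVec]
  have hμ1 : ζ ≠ μ := by
    intro h; exact hμζ (by rw [h])
  have hμ2 : -ζ ≠ μ := by
    intro h; apply hμζ; rw [← h]; ring
  have e1 := key ζ hζ hμ1
  have e2 := key (-ζ) hζ' hμ2
  calc (Kzeta m X Y ζ) *ᵥ x
      = (Gpencil m X Y (-ζ))⁻¹ *ᵥ (A *ᵥ ((Gpencil m X Y ζ)⁻¹ *ᵥ (A *ᵥ x))) := by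
        rw [Kzeta, hGT, ← Matrix.mulVec_mulVec, ← Matrix.mulVec_mulVec, ← Matrix.mulVec_mulVec]
    _ = (ζ - μ)⁻¹ • ((Gpencil m X Y (-ζ))⁻¹ *ᵥ (A *ᵥ x)) := by
        rw [e1, Matrix.mulVec_smul, Matrix.mulVec_smul]
    _ = (ζ - μ)⁻¹ • ((-ζ - μ)⁻¹ • x) := by rw [e2]
    _ = (1 / (μ ^ 2 - ζ ^ 2)) • x := by
        rw [smul_smul]
        congr 1
        have h1 : ζ - μ ≠ 0 := sub_ne_zero.mpr hμ1
        have h2 : -ζ - μ ≠ 0 := sub_ne_zero.mpr hμ2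
        have h3 : μ ^ 2 - ζ ^ 2 ≠ 0 := sub_ne_zero.mpr hμζ
        field_simp
        ring
end

section
/- Let X be skew-symmetric and Y symmetric real m×m matrices, ζ ∈ ℂ with ζX+Y invertible, and K(ζ) = (-ζX+Y)^{-1} X (ζX+Y)^{-1} X. If θ is a nonzero eigenvalue of K(ζ) and μ is a complex square root of (1/θ) + ζ², then both μ and -μ are eigenvalues of the pencil λX + Y, i.e., det(±μ X + Y) = 0. -/
open Matrix

/-- `K(ζ) = (-ζX+Y)⁻¹ X (ζX+Y)⁻¹ X`. -/
noncomputable def Kzeta' (m : ℕ) (X Y : Matrix (Fin m) (Fin m) ℝ) (z : ℂ) :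
    Matrix (Fin m) (Fin m) ℂ :=
  (Gpencil m X Y (-z))⁻¹ * X.map Complex.ofReal *
    (Gpencil m X Y z)⁻¹ * X.map Complex.ofReal

/-- a nonzero eigenvalue `θ` of `K(ζ)` yields the ± matching pair of
eigenvalues `±μ`, `μ² = 1/θ + ζ²`, of the pencil `λX + Y`. -/
theorem stmt5 (m : ℕ) (X Y : Matrix (Fin m) (Fin m) ℝ)
    (hX : Xᵀ = -X) (hY : Yᵀ = Y) (ζ : ℂ)
    (hinv : IsUnit (Gpencil m X Y ζ))
    (θ : ℂ) (hθ : θ ≠ 0)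
    (heig : (Kzeta' m X Y ζ - θ • 1).det = 0)
    (μ : ℂ) (hμ : μ ^ 2 = 1 / θ + ζ ^ 2) :
    (Gpencil m X Y μ).det = 0 ∧ (Gpencil m X Y (-μ)).det = 0 := by
  set X' : Matrix (Fin m) (Fin m) ℂ := X.map Complex.ofReal with hX'
  set Y' : Matrix (Fin m) (Fin m) ℂ := Y.map Complex.ofReal with hY'
  have hX'T : X'ᵀ = -X' := by
    rw [hX', ← Matrix.transpose_map, hX]
    ext i j; simp
  have hY'T : Y'ᵀ = Y' := by
    rw [hY', ← Matrix.transpose_map, hY]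
  -- transpose of pencil
  have hGT : ∀ z : ℂ, (Gpencil m X Y z)ᵀ = Gpencil m X Y (-z) := by
    intro z
    simp [Gpencil, transpose_add, transpose_smul, hX'T, hY'T, ← hX', ← hY', smul_neg, neg_smul]
  set A := Gpencil m X Y ζ with hA
  set B := Gpencil m X Y (-ζ) with hB
  have hBT : B = Aᵀ := (hGT ζ).symm
  have hdetA : IsUnit A.det := (Matrix.isUnit_iff_isUnit_det A).mp hinv
  have hdetB : IsUnit B.det := by rw [hBT, Matrix.det_transpose]; exact hdetA
  have hAA : A * A⁻¹ = 1 := Matrix.mul_nonsing_inv A hdetA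
  have hA'A : A⁻¹ * A = 1 := Matrix.nonsing_inv_mul A hdetA
  have hBB : B * B⁻¹ = 1 := Matrix.mul_nonsing_inv B hdetB
  -- from heig get det (X' A⁻¹ X' - θ • B) = 0
  have hK : B * (Kzeta' m X Y ζ - θ • 1) = X' * A⁻¹ * X' - θ • B := by
    rw [Kzeta']
    simp only [← hX', ← hA, ← hB, mul_sub, mul_smul_comm, mul_one]
    rw [show B * (B⁻¹ * X' * A⁻¹ * X') = (B * B⁻¹) * (X' * A⁻¹ * X') by
      noncomm_ring, hBB, one_mul]
  have hdet0 : (X' * A⁻¹ * X' - θ • B).det = 0 := by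
    rw [← hK, Matrix.det_mul, heig, mul_zero]
  -- key identity
  have hYexp : Y' = A - ζ • X' := by rw [hA]; simp [Gpencil, ← hX', ← hY']
  have hBexp : B = A - (2 * ζ) • X' := by
    rw [hB, hA]; simp [Gpencil, ← hX', ← hY', two_mul]; module
  have hGm : Gpencil m X Y (-μ) = A - (μ + ζ) • X' := by
    rw [Gpencil, ← hX', ← hY', hYexp]; module
  have hGp : Gpencil m X Y μ = A + (μ - ζ) • X' := by
    rw [Gpencil, ← hX', ← hY', hYexp]; module
  have key : (Gpencil m X Y (-μ)) * A⁻¹ * (Gpencil m X Y μ)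
      = (-(1/θ)) • (X' * A⁻¹ * X' - θ • B) := by
    have hc : (μ + ζ) * (μ - ζ) = 1 / θ := by
      rw [show (μ + ζ) * (μ - ζ) = μ ^ 2 - ζ ^ 2 by ring, hμ]; ring
    have hc2 : (1 / θ) * θ = 1 := one_div_mul_cancel hθ
    have e1 : (A - (μ + ζ) • X') * A⁻¹ = 1 - (μ + ζ) • (X' * A⁻¹) := by
      rw [sub_mul, Matrix.smul_mul, hAA]
    rw [hGm, hGp, hBexp, e1, sub_mul, one_mul, mul_add]
    rw [show (μ + ζ) • (X' * A⁻¹) * A = (μ + ζ) • X' by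
        rw [Matrix.smul_mul, mul_assoc, hA'A, mul_one],
      show (μ + ζ) • (X' * A⁻¹) * (μ - ζ) • X' = ((μ + ζ) * (μ - ζ)) • (X' * A⁻¹ * X') by
        rw [Matrix.smul_mul, Matrix.mul_smul, smul_smul]]
    rw [hc]
    match_scalars
    · linear_combination -hc2
    · linear_combination ((2:ℂ) * ζ) * hc2
    · ring
  have hdetprod : (Gpencil m X Y (-μ)).det * A⁻¹.det * (Gpencil m X Y μ).det = 0 := by
    rw [← Matrix.det_mul, ← Matrix.det_mul, key, Matrix.det_smul, hdet0, mul_zero]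
  have hdetT : (Gpencil m X Y (-μ)).det = (Gpencil m X Y μ).det := by
    rw [← hGT μ, Matrix.det_transpose]
  have hAinv : A⁻¹.det ≠ 0 := by
    rw [Matrix.det_nonsing_inv, Ring.inverse_eq_inv]
    exact inv_ne_zero hdetA.ne_zero
  have h0 : (Gpencil m X Y μ).det = 0 := by
    rw [hdetT] at hdetprod
    rcases mul_eq_zero.mp hdetprod with h | h
    · rcases mul_eq_zero.mp h with h' | h'
      · exact h'
      · exact absurd h' hAinv
    · exact h
  exact ⟨h0, by rw [hdetT, h0]⟩
end

section
/- Every eigenvalue of the complex m×m matrix K(ζ) = (-ζX+Y)^{-1} X (ζX+Y)^{-1} X, where X is real skew-symmetric, Y real symmetric, and ζX+Y invertible, has even algebraic multiplicity, provided m is even and X is invertible. -/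
/-!
Put `A = X⁻¹Y`. Then `K(ζ) = (A² - ζ²)⁻¹`, and `(-A)ᵀ = XAX⁻¹`, so `A` and `-A` have the same
characteristic polynomial `p`; as `m` is even this makes `p` even, `p(x) = r(x²)`. From
`x² - A² = (x - A)(x + A)` we get `χ_{A²}(x²) = χ_A(x) χ_{-A}(x) = r(x²)²`, so `χ_{A²} = r²`.
Shifting by `ζ²` keeps it a square, and inverting reverses the characteristic polynomial up to a
constant factor, a square over `ℂ`. The roots of a square have even multiplicity.
-/

open Matrix Polynomial

namespace Polynomial

variable {R : Type*} [CommRing R]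

theorem expand_two_contract_of_comp_neg_X [NoZeroDivisors R] [CharZero R] {f : R[X]}
    (hf : f.comp (-X) = f) : expand R 2 (contract 2 f) = f := by
  ext k
  rw [coeff_expand two_pos, coeff_contract two_ne_zero]
  split_ifs with hk
  · rw [Nat.div_mul_cancel hk]
  · have hcoeff := congrArg (coeff · k) hf
    simp only [show (-X : R[X]) = C (-1) * X by simp, comp_C_mul_X_coeff,
      (Nat.not_even_iff_odd.mp (even_iff_two_dvd.not.mpr hk)).neg_one_pow, mul_neg_one] at hcoeff
    exact (CharZero.neg_eq_self_iff.mp hcoeff).symm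

theorem even_rootMultiplicity_of_isSquare [IsDomain R] {f : R[X]} (hf : IsSquare f) (h0 : f ≠ 0)
    (a : R) : Even (f.rootMultiplicity a) := by
  obtain ⟨g, rfl⟩ := hf
  exact ⟨_, rootMultiplicity_mul h0⟩

end Polynomial

namespace Matrix

variable {n R : Type*} [CommRing R]

theorem transpose_smul_add {P Q : Matrix n n R} (hP : Pᵀ = -P) (hQ : Qᵀ = Q) (z : R) :
    (z • P + Q)ᵀ = -z • P + Q := by
  rw [transpose_add, transpose_smul, hP, hQ, smul_neg, neg_smul]

variable [Fintype n] [DecidableEq n]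

theorem charpoly_neg (M : Matrix n n R) :
    (-M).charpoly = (-1) ^ Fintype.card n * M.charpoly.comp (-X) := by
  have hmap : (compRingHom (-X)).mapMatrix (charmatrix M) = -charmatrix (-M) := by
    ext i j : 1
    by_cases h : i = j <;> simp [h, sub_eq_add_neg, add_comm]
  rw [charpoly, charpoly, ← coe_compRingHom_apply, RingHom.map_det, hmap, det_neg, ← mul_assoc,
    ← mul_pow, neg_one_mul, neg_neg, one_pow, one_mul]

theorem expand_charpoly_sq (M : Matrix n n R) :
    expand R 2 (M ^ 2).charpoly = M.charpoly * (-M).charpoly := by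
  have hmap : (expand R 2).mapMatrix (charmatrix (M ^ 2)) = charmatrix M * charmatrix (-M) := by
    have hX : (expand R 2).mapMatrix (scalar n X) = scalar n X * scalar n X := by
      rw [← map_mul, ← pow_two]; ext i j : 1; by_cases h : i = j <;> simp [h]
    have hC : (expand R 2).mapMatrix (C.mapMatrix M) = C.mapMatrix M := by
      ext i j : 1; simp
    rw [charmatrix, charmatrix, charmatrix, map_sub, map_pow, map_pow, hX, hC, map_neg,
      sub_neg_eq_add, pow_two]
    exact (scalar_commute X (Commute.all X) _).mul_self_sub_mul_self_eq'
  rw [charpoly, charpoly, charpoly, ← det_mul, ← hmap, AlgHom.map_det]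

theorem isSquare_charpoly_sq [NoZeroDivisors R] [CharZero R] {M : Matrix n n R}
    (hn : Even (Fintype.card n)) (hM : (-M).charpoly = M.charpoly) :
    IsSquare (M ^ 2).charpoly := by
  have heven : M.charpoly.comp (-X) = M.charpoly := by
    simpa [hM, hn.neg_one_pow] using (charpoly_neg M).symm
  refine ⟨contract 2 M.charpoly, expand_injective two_pos ?_⟩
  rw [expand_charpoly_sq, hM, map_mul, expand_two_contract_of_comp_neg_X heven]

theorem charpoly_neg_inv_mul_eq {P Q : Matrix n n R} (hP : Pᵀ = -P) (hQ : Qᵀ = Q)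
    (hPu : IsUnit P) : (-(P⁻¹ * Q)).charpoly = (P⁻¹ * Q).charpoly := by
  have hPdet : IsUnit P.det := (isUnit_iff_isUnit_det P).mp hPu
  have hneg : (-P)⁻¹ = -P⁻¹ := inv_eq_right_inv (by rw [neg_mul_neg, mul_nonsing_inv _ hPdet])
  have hconj : (-(P⁻¹ * Q))ᵀ = hPu.unit.val * (P⁻¹ * Q) * hPu.unit.val⁻¹ := by
    rw [transpose_neg, transpose_mul, transpose_nonsing_inv, hP, hQ, hneg, mul_neg, neg_neg,
      IsUnit.unit_spec, ← mul_assoc P, mul_nonsing_inv _ hPdet, one_mul]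
  rw [← charpoly_transpose, hconj, charpoly_units_conj]

theorem isSquare_charpoly_inv {K : Type*} [Field K] [IsAlgClosed K] {M : Matrix n n K}
    (hM : IsUnit M) (h : IsSquare M.charpoly) : IsSquare M⁻¹.charpoly := by
  obtain ⟨r, hr⟩ := h
  obtain ⟨c, hc⟩ := IsAlgClosed.exists_eq_mul_self ((-1) ^ Fintype.card n * Ring.inverse M.det)
  refine ⟨C c * r.reverse, ?_⟩
  rw [charpoly_inv M hM, ← reverse_charpoly, hr, reverse_mul_of_domain, ← C_1, ← C_neg, ← C_pow,
    ← C_mul, hc, C_mul]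
  ring

theorem inv_mul_mul_inv_mul {P : Matrix n n R} (hP : IsUnit P) (S T : Matrix n n R) :
    S⁻¹ * P * T⁻¹ * P = (P⁻¹ * T * (P⁻¹ * S))⁻¹ := by
  rw [mul_inv_rev, mul_inv_rev, mul_inv_rev,
    nonsing_inv_nonsing_inv _ ((isUnit_iff_isUnit_det P).mp hP), ← mul_assoc]

theorem sq_sub_scalar_eq_mul {P : Matrix n n R} (hP : IsUnit P) (Q : Matrix n n R) (z : R) :
    (P⁻¹ * Q) ^ 2 - scalar n (z ^ 2) = P⁻¹ * (z • P + Q) * (P⁻¹ * (-z • P + Q)) := by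
  have hpencil : ∀ w : R, P⁻¹ * (w • P + Q) = P⁻¹ * Q + scalar n w := fun w => by
    rw [mul_add, mul_smul_comm, nonsing_inv_mul _ ((isUnit_iff_isUnit_det P).mp hP), add_comm,
      smul_one_eq_diagonal, scalar_apply]
  rw [hpencil, hpencil, map_neg, ← sub_eq_add_neg, map_pow,
    (scalar_commute z (Commute.all z) _).symm.sq_sub_sq]

end Matrix

/-- every eigenvalue of `K(ζ)` has even algebraic multiplicity
(`m` even, `X` invertible). -/
theorem stmt6 (m : ℕ) (hm : Even m) (X Y : Matrix (Fin m) (Fin m) ℝ)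
    (hX : Xᵀ = -X) (hY : Yᵀ = Y) (hXinv : IsUnit X)
    (ζ : ℂ) (hinv : IsUnit (Gpencil m X Y ζ)) (θ : ℂ) :
    Even ((Kzeta' m X Y ζ).charpoly.rootMultiplicity θ) := by
  set Xc := X.map Complex.ofReal
  set Yc := Y.map Complex.ofReal
  have hXc : Xcᵀ = -Xc := by rw [← transpose_map, hX, Matrix.map_neg _ Complex.ofReal_neg]
  have hYc : Ycᵀ = Yc := by rw [← transpose_map, hY]
  have hXcu : IsUnit Xc := hXinv.map Complex.ofRealHom.mapMatrix
  have hinv_neg : IsUnit (Gpencil m X Y (-ζ)) := by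
    rw [Gpencil, ← transpose_smul_add hXc hYc]
    exact (isUnit_transpose _).mpr hinv
  have hK : Kzeta' m X Y ζ = ((Xc⁻¹ * Yc) ^ 2 - scalar _ (ζ ^ 2))⁻¹ := by
    rw [Kzeta', inv_mul_mul_inv_mul hXcu, sq_sub_scalar_eq_mul hXcu]
    rfl
  have hunit : IsUnit ((Xc⁻¹ * Yc) ^ 2 - scalar _ (ζ ^ 2)) := by
    have hXcu' := isUnit_nonsing_inv_iff.mpr hXcu
    rw [sq_sub_scalar_eq_mul hXcu]
    exact (hXcu'.mul hinv).mul (hXcu'.mul hinv_neg)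
  have hsq : IsSquare ((Xc⁻¹ * Yc) ^ 2).charpoly :=
    isSquare_charpoly_sq (by simpa using hm) (charpoly_neg_inv_mul_eq hXc hYc hXcu)
  rw [hK]
  refine even_rootMultiplicity_of_isSquare (isSquare_charpoly_inv hunit ?_)
    (charpoly_monic _).ne_zero θ
  rw [charpoly_sub_scalar]
  exact hsq.map (compRingHom _)
end

section
/- Let P(λ) be a real T-even matrix polynomial of odd degree d, ℓ = (d+1)/2, and L_P(λ) the 2×2 block pencil with (1,1)-block M_P(λ), (1,2)-block L_{ℓ-1}(-λ)^T ⊗ I_n, (2,1)-block L_{ℓ-1}(λ) ⊗ I_n, and (2,2)-block zero. Then L_P(λ)^T = L_P(-λ); equivalently, writing L_P(λ) = λX + Y, the matrix X is skew-symmetric and Y is symmetric. -/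
open Matrix

noncomputable def MPmat (n d : ℕ) (P : ℕ → Matrix (Fin n) (Fin n) ℝ) (t : ℝ) :
    Matrix (Fin ((d + 1) / 2) × Fin n) (Fin ((d + 1) / 2) × Fin n) ℝ :=
  Matrix.of fun p q =>
    if p.1 = q.1 then
      ((-1 : ℝ) ^ (p.1 : ℕ) •
        (t • P (d - 2 * (p.1 : ℕ)) + P (d - 2 * (p.1 : ℕ) - 1))) p.2 q.2
    else 0

noncomputable def LkR (l : ℕ) (t : ℝ) : Matrix (Fin (l - 1)) (Fin l) ℝ :=
  Matrix.of fun i j =>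
    if (j : ℕ) = (i : ℕ) then 1 else if (j : ℕ) = (i : ℕ) + 1 then -t else 0

noncomputable def LkIR (n l : ℕ) (t : ℝ) :
    Matrix (Fin (l - 1) × Fin n) (Fin l × Fin n) ℝ :=
  Matrix.of fun p q => LkR l t p.1 q.1 * (if p.2 = q.2 then 1 else 0)

/-- The block pencil `L_P(λ) = [[M_P(λ), L_{ℓ-1}(-λ)ᵀ⊗I_n], [L_{ℓ-1}(λ)⊗I_n, 0]]`. -/
noncomputable def LPmat (n d : ℕ) (P : ℕ → Matrix (Fin n) (Fin n) ℝ) (t : ℝ) :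
    Matrix ((Fin ((d + 1) / 2) × Fin n) ⊕ (Fin ((d + 1) / 2 - 1) × Fin n))
      ((Fin ((d + 1) / 2) × Fin n) ⊕ (Fin ((d + 1) / 2 - 1) × Fin n)) ℝ :=
  Matrix.fromBlocks (MPmat n d P t) ((LkIR n ((d + 1) / 2) (-t))ᵀ)
    (LkIR n ((d + 1) / 2) t) 0

section TEvenCoefficients

variable {n : Type*} {R : Type*} [CommRing R]

lemma transpose_eq_neg_of_odd {P : ℕ → Matrix n n R} (hP : ∀ k, (P k)ᵀ = (-1 : R) ^ k • P k)
    {k : ℕ} (hk : Odd k) : (P k)ᵀ = -P k := by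
  rw [hP, hk.neg_one_pow, neg_one_smul]

lemma transpose_eq_self_of_even {P : ℕ → Matrix n n R} (hP : ∀ k, (P k)ᵀ = (-1 : R) ^ k • P k)
    {k : ℕ} (hk : Even k) : (P k)ᵀ = P k := by
  rw [hP, hk.neg_one_pow, one_smul]

lemma transpose_smul_add_of_skew_of_symm {A B : Matrix n n R} (hA : Aᵀ = -A) (hB : Bᵀ = B)
    (t : R) : (t • A + B)ᵀ = (-t) • A + B := by
  rw [transpose_add, transpose_smul, hA, hB, smul_neg, neg_smul]

end TEvenCoefficients

lemma MPmat_transpose (n d : ℕ) (hd : Odd d) (P : ℕ → Matrix (Fin n) (Fin n) ℝ)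
    (hP : ∀ k, (P k)ᵀ = (-1 : ℝ) ^ k • P k) (t : ℝ) :
    (MPmat n d P t)ᵀ = MPmat n d P (-t) := by
  ext ⟨i, a⟩ ⟨j, b⟩
  simp only [MPmat, transpose_apply, of_apply]
  rcases eq_or_ne i j with rfl | hij
  · obtain ⟨m, rfl⟩ := hd
    have hi : (i : ℕ) ≤ m := by omega
    have hodd : Odd (2 * m + 1 - 2 * i) := ⟨m - i, by omega⟩
    have heven : Even (2 * m + 1 - 2 * i - 1) := ⟨m - i, by omega⟩
    have hblock := transpose_smul_add_of_skew_of_symm (transpose_eq_neg_of_odd hP hodd)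
      (transpose_eq_self_of_even hP heven) t
    rw [if_pos rfl, if_pos rfl, Matrix.smul_apply, Matrix.smul_apply,
      ← transpose_apply (t • P _ + P _) a b, hblock]
  · rw [if_neg hij, if_neg hij.symm]

/-- for a T-even `P` of odd degree `d`, `L_P(λ)ᵀ = L_P(-λ)`. -/
theorem stmt13 (n d : ℕ) (hd : Odd d) (P : ℕ → Matrix (Fin n) (Fin n) ℝ)
    (hP : ∀ k, (P k)ᵀ = (-1 : ℝ) ^ k • P k) (t : ℝ) :
    (LPmat n d P t)ᵀ = LPmat n d P (-t) := by
  rw [LPmat, LPmat, fromBlocks_transpose, transpose_transpose, MPmat_transpose n d hd P hP t,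
    transpose_zero, neg_neg]
end
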